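/- Let n₁, n₂ be positive integers, Q_α = 2 n_α + 2, and 0 < p ≤ ∞ with p finite. There exists a constant C > 0 depending only on p, Q₁, Q₂ such that: if u : 𝒰 = ℝ₊² × ℋ_{n₁} × ℋ_{n₂} → ℂ is a C² function satisfying the heat equations (∂/∂t_α + Δ_α) u = 0 for α = 1,2, and its non-tangential maximal function u* belongs to L^p(ℋ_{n₁} × ℋ_{n₂}), then |u(t₁,t₂,g₁,g₂)| ≤ C ‖u*‖_{L^p} t₁^{−Q₁/(2p)} t₂^{−Q₂/(2p)} for every (t₁,t₂,g₁,g₂) ∈ 𝒰. -/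

import Mathlib

open MeasureTheory

noncomputable section

/-- A point of the Heisenberg group ℋ_n : `(s, z) ∈ ℝ × ℂⁿ`. -/
abbrev Heis (n : ℕ) := ℝ × (Fin n → ℂ)

/-- The Heisenberg group law. -/
def hmul {n : ℕ} (g g' : Heis n) : Heis n :=
  (g.1 + g'.1 + 2 * (∑ j, (g.2 j * (starRingEnd ℂ) (g'.2 j)).im), g.2 + g'.2)

/-- The Heisenberg group inverse. -/
def hinv {n : ℕ} (g : Heis n) : Heis n := (-g.1, -g.2)

/-- The homogeneous norm `‖(s,z)‖ = (|z|⁴ + s²)^{1/4}`. -/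
def hnorm {n : ℕ} (g : Heis n) : ℝ :=
  ((∑ j, Complex.normSq (g.2 j)) ^ 2 + g.1 ^ 2) ^ (1/4 : ℝ)

/-- The flat-model ambient space `(t₁, t₂, g₁, g₂)`. -/
abbrev FlatPt (n₁ n₂ : ℕ) := ℝ × ℝ × Heis n₁ × Heis n₂

/-- The left-invariant vector field `X_j = ∂/∂x_j + 2 x_{n+j} ∂/∂s`. -/
def XD {n : ℕ} (j : Fin n) (f : Heis n → ℂ) (g : Heis n) : ℂ :=
  fderiv ℝ f g (2 * (g.2 j).im, Pi.single j 1)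

/-- The left-invariant vector field `X_{n+j} = ∂/∂x_{n+j} − 2 x_j ∂/∂s`. -/
def YD {n : ℕ} (j : Fin n) (f : Heis n → ℂ) (g : Heis n) : ℂ :=
  fderiv ℝ f g (-2 * (g.2 j).re, Pi.single j Complex.I)

/-- The sub-Laplacian `Δ = −(1/(4n)) ∑_{j=1}^{2n} X_j²`. -/
def subLaplacian (n : ℕ) (f : Heis n → ℂ) (g : Heis n) : ℂ :=
  -(1 / (4 * (n : ℂ))) * ∑ j : Fin n, (XD j (XD j f) g + YD j (YD j f) g)

/-- `u` satisfies the heat equations `(∂/∂t_α + Δ_α) u = 0`, `α = 1,2`, at `p`. -/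
def SatisfiesHeatEquationsAt (n₁ n₂ : ℕ) (u : FlatPt n₁ n₂ → ℂ) (p : FlatPt n₁ n₂) : Prop :=
  fderiv ℝ u p (1, 0, 0, 0)
      + subLaplacian n₁ (fun g => u (p.1, p.2.1, g, p.2.2.2)) p.2.2.1 = 0 ∧
  fderiv ℝ u p (0, 1, 0, 0)
      + subLaplacian n₂ (fun g => u (p.1, p.2.1, p.2.2.1, g)) p.2.2.2 = 0

/-- The non-tangential maximal function `u*(g) = sup_{(t,h) ∈ Γ_g} |u(t,h)|`,
as an `ℝ≥0∞`-valued supremum, where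
`Γ_g = {(t,h) : ‖h_α⁻¹·g_α‖² < t_α, α = 1,2}`. -/
def ntMax (n₁ n₂ : ℕ) (u : FlatPt n₁ n₂ → ℂ) (g : Heis n₁ × Heis n₂) : ENNReal :=
  ⨆ (x : FlatPt n₁ n₂) (_ : hnorm (hmul (hinv x.2.2.1) g.1) ^ 2 < x.1 ∧
      hnorm (hmul (hinv x.2.2.2) g.2) ^ 2 < x.2.1), ENNReal.ofReal ‖u x‖

/-!
Fix `q = (t₁, t₂, h₁, h₂)`. For every `g` in the product of the Korányi balls
`B_α = {g_α : ‖h_α⁻¹ g_α‖² < t_α}` the point `q` lies in the cone `Γ_g`, so `|u(q)| ≤ u*(g)`.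
Integrating `u*^p` over `B₁ × B₂` gives `|u(q)|^p |B₁| |B₂| ≤ ‖u*‖_p^p`. Lebesgue measure is a Haar
measure of `ℋ_n` and the dilations `(s, z) ↦ (r² s, r z)` scale both the homogeneous norm (by `r`)
and the measure (by `r^Q`), so `|B_α| = c_α t_α^{Q_α/2}` with `c_α > 0`.
-/

open scoped ENNReal

instance (n : ℕ) : (volume : Measure (Heis n)).IsAddHaarMeasure :=
  Measure.prod.instIsAddHaarMeasure _ _

theorem continuous_hnorm (n : ℕ) : Continuous (hnorm (n := n)) :=
  ((continuous_finsetSum _ fun j _ =>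
      Complex.continuous_normSq.comp ((continuous_apply j).comp continuous_snd)).pow 2
    |>.add (continuous_fst.pow 2)).rpow_const fun _ => Or.inr (by norm_num)

theorem isOpen_hnorm_sq_lt (n : ℕ) (t : ℝ) : IsOpen {h : Heis n | hnorm h ^ 2 < t} :=
  isOpen_lt ((continuous_hnorm n).pow 2) continuous_const

theorem hnorm_lt_one_iff {n : ℕ} (h : Heis n) :
    hnorm h < 1 ↔ (∑ j, Complex.normSq (h.2 j)) ^ 2 + h.1 ^ 2 < 1 :=
  Real.rpow_lt_one_iff' (by positivity) (by norm_num)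

def heisDilation (n : ℕ) (r : ℝ) : Heis n →ₗ[ℝ] Heis n :=
  LinearMap.prodMap ((r ^ 2) • LinearMap.id) (r • LinearMap.id)

theorem det_heisDilation (n : ℕ) (r : ℝ) :
    LinearMap.det (heisDilation n r) = r ^ (2 * n + 2) := by
  rw [heisDilation, LinearMap.det_prodMap, LinearMap.det_smul, LinearMap.det_smul]
  simp [Module.finrank_pi_fintype, Complex.finrank_real_complex]
  ring

theorem hnorm_heisDilation {n : ℕ} {r : ℝ} (hr : 0 ≤ r) (h : Heis n) :
    hnorm (heisDilation n r h) = r * hnorm h := by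
  have hX : 0 ≤ (∑ j, Complex.normSq (h.2 j)) ^ 2 + h.1 ^ 2 := by positivity
  simp only [hnorm, heisDilation, LinearMap.prodMap_apply, LinearMap.smul_apply,
    LinearMap.id_apply, Pi.smul_apply, Complex.real_smul, Complex.normSq_mul,
    Complex.normSq_ofReal, smul_eq_mul]
  rw [← Finset.mul_sum, show (r * r * ∑ j, Complex.normSq (h.2 j)) ^ 2 + (r ^ 2 * h.1) ^ 2
      = r ^ 4 * ((∑ j, Complex.normSq (h.2 j)) ^ 2 + h.1 ^ 2) by ring,
    Real.mul_rpow (by positivity) hX, ← Real.rpow_natCast, ← Real.rpow_mul hr]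
  norm_num

def heisBallVolume (n : ℕ) : ℝ :=
  (volume {h : Heis n | hnorm h ^ 2 < 1}).toReal

theorem isBounded_hnorm_sq_lt_one (n : ℕ) :
    Bornology.IsBounded {h : Heis n | hnorm h ^ 2 < 1} := by
  refine (Metric.isBounded_closedBall (x := 0) (r := 1)).subset fun h hh => ?_
  have hsum := (hnorm_lt_one_iff h).1 <|
    (sq_lt_one_iff₀ (Real.rpow_nonneg (by positivity) _)).1 hh
  have hnormSq : ∀ j, Complex.normSq (h.2 j) ≤ ∑ i, Complex.normSq (h.2 i) := fun j =>
    Finset.single_le_sum (fun i _ => Complex.normSq_nonneg _) (Finset.mem_univ j)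
  have hsum_le : ∑ i, Complex.normSq (h.2 i) ≤ 1 := by
    nlinarith [Finset.sum_nonneg fun i (_ : i ∈ Finset.univ) => Complex.normSq_nonneg (h.2 i)]
  rw [mem_closedBall_zero_iff, Prod.norm_def, max_le_iff]
  refine ⟨abs_le.2 ⟨by nlinarith, by nlinarith⟩, (pi_norm_le_iff_of_nonneg zero_le_one).2
    fun j => ?_⟩
  rw [← sq_le_one_iff₀ (norm_nonneg _), ← Complex.normSq_eq_norm_sq]
  exact (hnormSq j).trans hsum_le

theorem heisBallVolume_pos (n : ℕ) : 0 < heisBallVolume n := by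
  refine ENNReal.toReal_pos ?_ (isBounded_hnorm_sq_lt_one n).measure_lt_top.ne
  refine ((isOpen_hnorm_sq_lt n 1).measure_pos volume ⟨0, ?_⟩).ne'
  simp [hnorm]

theorem volume_hnorm_sq_lt (n : ℕ) {t : ℝ} (ht : 0 < t) :
    volume {h : Heis n | hnorm h ^ 2 < t} = ENNReal.ofReal (heisBallVolume n * t ^ (n + 1)) := by
  set r := (Real.sqrt t)⁻¹
  have hr : 0 < r := inv_pos.2 (Real.sqrt_pos.2 ht)
  have hball : {h : Heis n | hnorm h ^ 2 < t}
      = heisDilation n r ⁻¹' {h : Heis n | hnorm h ^ 2 < 1} := by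
    ext h
    simp only [Set.mem_ofPred_eq, Set.mem_preimage, hnorm_heisDilation hr.le, mul_pow, r,
      inv_pow, Real.sq_sqrt ht.le]
    rw [inv_mul_lt_one₀ ht]
  have hdet : LinearMap.det (heisDilation n r) ≠ 0 := by
    rw [det_heisDilation]; positivity
  rw [hball, Measure.addHaar_preimage_linearMap _ hdet, det_heisDilation, heisBallVolume,
    ENNReal.ofReal_mul (by positivity), ENNReal.ofReal_toReal
      (isBounded_hnorm_sq_lt_one n).measure_lt_top.ne, mul_comm]
  congr 3
  rw [abs_of_pos (by positivity), ← inv_pow, inv_inv, show 2 * n + 2 = 2 * (n + 1) by ring,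
    pow_mul, Real.sq_sqrt ht.le]

theorem measurePreserving_add_shear {E G : Type*} [MeasurableSpace E] [AddGroup G]
    [MeasurableSpace G] [MeasurableAdd₂ G] (μ : Measure E) (ν : Measure G) [SFinite μ]
    [SFinite ν] [ν.IsAddRightInvariant] {L : E → G} (hL : Measurable L) :
    MeasurePreserving (fun x : G × E => (x.1 + L x.2, x.2)) (ν.prod μ) (ν.prod μ) :=
  (Measure.measurePreserving_swap.comp ((MeasurePreserving.id μ).skew_product
      (g := fun z s => s + L z) (measurable_snd.add (hL.comp measurable_fst))
      (Filter.Eventually.of_forall fun z => map_add_right_eq_self ν (L z)))).comp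
    Measure.measurePreserving_swap

theorem measurePreserving_hmul {n : ℕ} (a : Heis n) :
    MeasurePreserving (hmul a) volume volume := by
  set L : (Fin n → ℂ) → ℝ := fun z => 2 * ∑ j, (a.2 j * (starRingEnd ℂ) (z j)).im
  have hL : Continuous L := continuous_const.mul <| continuous_finsetSum _ fun j _ =>
    Complex.continuous_im.comp <| continuous_const.mul <|
      Complex.continuous_conj.comp (continuous_apply j)
  have hshear : hmul a = (a + ·) ∘ fun g : Heis n => (g.1 + L g.2, g.2) := by
    funext g
    refine Prod.ext ?_ rfl
    simp only [hmul, Function.comp_apply, Prod.fst_add, L]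
    ring
  rw [hshear]
  exact (measurePreserving_add_left volume a).comp
    (measurePreserving_add_shear volume volume hL.measurable)

theorem volume_hnorm_hmul_sq_lt {n : ℕ} (a : Heis n) {t : ℝ} (ht : 0 < t) :
    volume {g : Heis n | hnorm (hmul a g) ^ 2 < t}
      = ENNReal.ofReal (heisBallVolume n * t ^ (n + 1)) := by
  rw [← volume_hnorm_sq_lt n ht]
  exact (measurePreserving_hmul a).measure_preimage
    (isOpen_hnorm_sq_lt n t).measurableSet.nullMeasurableSet

theorem measurableSet_hnorm_hmul_sq_lt {n : ℕ} (a : Heis n) (t : ℝ) :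
    MeasurableSet {g : Heis n | hnorm (hmul a g) ^ 2 < t} :=
  (measurePreserving_hmul a).measurable (isOpen_hnorm_sq_lt n t).measurableSet

theorem ofReal_norm_le_ntMax {n₁ n₂ : ℕ} (u : FlatPt n₁ n₂ → ℂ) {q : FlatPt n₁ n₂}
    {g : Heis n₁ × Heis n₂} (hg : hnorm (hmul (hinv q.2.2.1) g.1) ^ 2 < q.1 ∧
      hnorm (hmul (hinv q.2.2.2) g.2) ^ 2 < q.2.1) :
    ENNReal.ofReal ‖u q‖ ≤ ntMax n₁ n₂ u g :=
  le_iSup₂_of_le q hg le_rfl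

theorem rpow_mul_measure_le_lintegral_rpow {α : Type*} [MeasurableSpace α] (μ : Measure α)
    {f : α → ℝ≥0∞} {s : Set α} (hs : MeasurableSet s) {a : ℝ≥0∞} (hf : ∀ x ∈ s, a ≤ f x)
    {p : ℝ} (hp : 0 ≤ p) : a ^ p * μ s ≤ ∫⁻ x, f x ^ p ∂μ :=
  calc a ^ p * μ s = ∫⁻ _ in s, a ^ p ∂μ := (setLIntegral_const s _).symm
    _ ≤ ∫⁻ x in s, f x ^ p ∂μ :=
      setLIntegral_mono' hs fun x hx => ENNReal.rpow_le_rpow (hf x hx) hp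
    _ ≤ ∫⁻ x, f x ^ p ∂μ := setLIntegral_le_lintegral s _

theorem ENNReal.le_ofReal_rpow_mul_rpow_of_rpow_mul_le {a I : ℝ≥0∞} {m p : ℝ} (hm : 0 < m)
    (hp : 0 < p) (h : a ^ p * ENNReal.ofReal m ≤ I) :
    a ≤ ENNReal.ofReal (m ^ (-(1 / p))) * I ^ (1 / p) := by
  simp only [one_div]
  have hmp : 0 < m ^ p⁻¹ := Real.rpow_pos_of_pos hm _
  have hscaled : a * ENNReal.ofReal (m ^ p⁻¹) ≤ I ^ p⁻¹ := by
    rw [ENNReal.le_rpow_inv_iff hp, ENNReal.mul_rpow_of_nonneg _ _ hp.le,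
      ENNReal.ofReal_rpow_of_pos hmp, ← Real.rpow_mul hm.le, inv_mul_cancel₀ hp.ne',
      Real.rpow_one]
    exact h
  rw [Real.rpow_neg hm.le, ENNReal.ofReal_inv_of_pos hmp, mul_comm, ← div_eq_mul_inv]
  exact (ENNReal.le_div_iff_mul_le (Or.inl (ENNReal.ofReal_pos.2 hmp).ne')
    (Or.inl ENNReal.ofReal_ne_top)).2 hscaled

theorem Real.mul_pow_succ_rpow_neg_one_div {v t p : ℝ} (hv : 0 < v) (ht : 0 < t) (n : ℕ) :
    (v * t ^ (n + 1)) ^ (-(1 / p)) = v ^ (-(1 / p)) * t ^ (-(2 * (n : ℝ) + 2) / (2 * p)) := by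
  rw [Real.mul_rpow hv.le (by positivity), ← Real.rpow_natCast, ← Real.rpow_mul ht.le]
  congr 2
  push_cast
  ring

theorem heat_solution_pointwise_bound_general (n₁ n₂ : ℕ)
    (p : ℝ) (hp : 0 < p) :
    ∃ C : ℝ, 0 < C ∧ ∀ u : FlatPt n₁ n₂ → ℂ,
      ContDiffOn ℝ 2 u {q : FlatPt n₁ n₂ | 0 < q.1 ∧ 0 < q.2.1} →
      (∀ q : FlatPt n₁ n₂, 0 < q.1 → 0 < q.2.1 → SatisfiesHeatEquationsAt n₁ n₂ u q) →
      (∫⁻ g : Heis n₁ × Heis n₂, (ntMax n₁ n₂ u g) ^ p) < ⊤ →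
      ∀ q : FlatPt n₁ n₂, 0 < q.1 → 0 < q.2.1 →
        ENNReal.ofReal ‖u q‖ ≤
          ENNReal.ofReal (C * q.1 ^ (-(2 * (n₁ : ℝ) + 2) / (2 * p))
              * q.2.1 ^ (-(2 * (n₂ : ℝ) + 2) / (2 * p)))
            * (∫⁻ g : Heis n₁ × Heis n₂, (ntMax n₁ n₂ u g) ^ p) ^ (1 / p) := by
  have hv₁ := heisBallVolume_pos n₁
  have hv₂ := heisBallVolume_pos n₂
  refine ⟨heisBallVolume n₁ ^ (-(1 / p)) * heisBallVolume n₂ ^ (-(1 / p)), by positivity, ?_⟩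
  intro u _ _ _ q ht₁ ht₂
  have hballs := (measurableSet_hnorm_hmul_sq_lt (hinv q.2.2.1) q.1).prod
    (measurableSet_hnorm_hmul_sq_lt (hinv q.2.2.2) q.2.1)
  have hcheb := rpow_mul_measure_le_lintegral_rpow volume hballs
    (fun g hg => ofReal_norm_le_ntMax u hg) hp.le
  rw [Measure.volume_eq_prod, Measure.prod_prod, volume_hnorm_hmul_sq_lt _ ht₁,
    volume_hnorm_hmul_sq_lt _ ht₂, ← ENNReal.ofReal_mul (by positivity),
    ← Measure.volume_eq_prod] at hcheb
  calc ENNReal.ofReal ‖u q‖ ≤ _ := ENNReal.le_ofReal_rpow_mul_rpow_of_rpow_mul_le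
        (by positivity) hp hcheb
    _ = _ := by
      rw [Real.mul_rpow (by positivity) (by positivity), Real.mul_pow_succ_rpow_neg_one_div hv₁ ht₁,
        Real.mul_pow_succ_rpow_neg_one_div hv₂ ht₂]
      congr 2
      ring

/-- Pointwise bound `|u(t₁,t₂,g)| ≤ C ‖u*‖_{L^p} t₁^{−Q₁/(2p)} t₂^{−Q₂/(2p)}`
for solutions of the bi-parameter heat equations whose non-tangential maximal
function lies in `L^p`. -/
theorem heat_solution_pointwise_bound (n₁ n₂ : ℕ) (hn₁ : 0 < n₁) (hn₂ : 0 < n₂)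
    (p : ℝ) (hp : 0 < p) :
    ∃ C : ℝ, 0 < C ∧ ∀ u : FlatPt n₁ n₂ → ℂ,
      ContDiffOn ℝ 2 u {q : FlatPt n₁ n₂ | 0 < q.1 ∧ 0 < q.2.1} →
      (∀ q : FlatPt n₁ n₂, 0 < q.1 → 0 < q.2.1 → SatisfiesHeatEquationsAt n₁ n₂ u q) →
      (∫⁻ g : Heis n₁ × Heis n₂, (ntMax n₁ n₂ u g) ^ p) < ⊤ →
      ∀ q : FlatPt n₁ n₂, 0 < q.1 → 0 < q.2.1 →
        ENNReal.ofReal ‖u q‖ ≤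
          ENNReal.ofReal (C * q.1 ^ (-(2 * (n₁ : ℝ) + 2) / (2 * p))
              * q.2.1 ^ (-(2 * (n₂ : ℝ) + 2) / (2 * p)))
            * (∫⁻ g : Heis n₁ × Heis n₂, (ntMax n₁ n₂ u g) ^ p) ^ (1 / p) :=
  heat_solution_pointwise_bound_general n₁ n₂ p hp
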